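/- For every integer k ≥ 1, the Okounkov q-zeta value of even weight satisfies Z(2k) = Σ_{j=2}^{2k} b^{2k}_{k,j−1}·[j] in ℚ⟦q⟧. -/

import Mathlib

open Polynomial

open scoped Classical

/-- The bracket `[s_1,…,s_l]` of Bachmann–Kühn: the generating series of multiple
divisor sums, defined coefficientwise. -/
noncomputable def bracket (l : ℕ) (s : Fin l → ℕ) : PowerSeries ℚ :=
  PowerSeries.mk fun N =>
    (∏ j, ((s j - 1).factorial : ℚ))⁻¹ *
      ∑ uv ∈ ((Finset.Iic fun _ => N : Finset (Fin l → ℕ)) ×ˢ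
            (Finset.Iic fun _ => N : Finset (Fin l → ℕ))).filter
          (fun uv => StrictAnti uv.1 ∧ (∀ j, 0 < uv.1 j) ∧ (∀ j, 0 < uv.2 j) ∧
            ∑ j, uv.1 j * uv.2 j = N),
        ∏ j, (uv.2 j : ℚ) ^ (s j - 1)

/-- `MD^♯`: the ℚ-span of all brackets with all entries ≥ 2 (including `[∅] = 1`). -/
noncomputable def MDsharp : Submodule ℚ (PowerSeries ℚ) :=
  Submodule.span ℚ {f | ∃ (l : ℕ) (s : Fin l → ℕ), (∀ j, 2 ≤ s j) ∧ f = bracket l s}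

/-- The q-analogue `Z_Q(s_1,…,s_l) = Σ_{n_1 > … > n_l > 0} ∏_j Q_{s_j}(q^{n_j})/(1-q^{n_j})^{s_j}`,
defined coefficientwise (the coefficient of `q^N` only receives contributions from
tuples with all `n_j ≤ N`, since `Q_s(0) = 0`). -/
noncomputable def ZQ (Q : ℕ → Polynomial ℚ) (l : ℕ) (s : Fin l → ℕ) : PowerSeries ℚ :=
  PowerSeries.mk fun N =>
    ∑ n ∈ ((Finset.Iic fun _ => N : Finset (Fin l → ℕ))).filter
        (fun n => StrictAnti n ∧ ∀ j, 0 < n j),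
      PowerSeries.coeff N
        (∏ j, Polynomial.aeval ((PowerSeries.X : PowerSeries ℚ) ^ n j) (Q (s j)) *
          ((1 - (PowerSeries.X : PowerSeries ℚ) ^ n j) ^ s j)⁻¹)

/-- Okounkov's polynomials `Q^O_s`. -/
noncomputable def QO (s : ℕ) : Polynomial ℚ :=
  if s % 2 = 0 then X ^ (s / 2) else X ^ ((s - 1) / 2) * (1 + X)

/-- The ℚ-span of Okounkov's q-multiple zeta values. -/
noncomputable def qMZV : Submodule ℚ (PowerSeries ℚ) :=
  Submodule.span ℚ {f | ∃ (l : ℕ) (s : Fin l → ℕ), (∀ j, 2 ≤ s j) ∧ f = ZQ QO l s}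

/-- Eulerian numbers `A(n,m)`. -/
def eulerianNumber (n m : ℕ) : ℚ :=
  ∑ j ∈ Finset.range (m + 1), (-1 : ℚ) ^ j * ((n + 1).choose j) * ((m + 1 - j : ℕ) : ℚ) ^ n

/-- The normalized Eulerian polynomials `Q^E_s(t) = t·P_{s-1}(t)/(s-1)!` (for `s ≥ 2`). -/
noncomputable def QE (s : ℕ) : Polynomial ℚ :=
  (((s - 1).factorial : ℚ)⁻¹) •
    ∑ m ∈ Finset.range (s - 1), C (eulerianNumber (s - 1) m) * X ^ (m + 1)

/-- The coefficients `λ^j_{a,b}` (with Mathlib's `bernoulli`, for which `B_1 = -1/2`). -/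
def lam (a b j : ℕ) : ℚ :=
  (-1 : ℚ) ^ (b - 1) * ((a + b - j - 1).choose (a - j)) * _root_.bernoulli (a + b - j) /
    (a + b - j).factorial

/-- The binomial polynomial `C(t+k-1-i, k-1) = (t+k-1-i)(t+k-2-i)⋯(t+1-i)/(k-1)!`. -/
noncomputable def binomPoly (k i : ℕ) : Polynomial ℚ :=
  (((k - 1).factorial : ℚ)⁻¹) •
    ∏ a ∈ Finset.range (k - 1), (X + C ((k : ℚ) - 1 - (i : ℚ) - (a : ℚ)))

/-- The numbers `b^k_{i,j}`, defined by `Σ_j (b^k_{i,j}/j!) t^j = C(t+k-1-i, k-1)`. -/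
noncomputable def bcoef (k i j : ℕ) : ℚ := (j.factorial : ℚ) * (binomPoly k i).coeff j

/-- The operator `d = q·(d/dq)` on `ℚ⟦q⟧`. -/
noncomputable def qd (f : PowerSeries ℚ) : PowerSeries ℚ :=
  PowerSeries.mk fun N => (N : ℚ) * PowerSeries.coeff N f

/-! ### Auxiliary lemmas -/

private noncomputable def Gaux (n s : ℕ) : PowerSeries ℚ :=
  PowerSeries.mk fun m => if n ∣ m then ((m / n + s).choose s : ℚ) else 0

private lemma one_sub_mul_Gaux0 (n : ℕ) (hn : 0 < n) :
    (1 - PowerSeries.X ^ n) * Gaux n 0 = 1 := by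
  ext N
  rw [sub_mul, one_mul, map_sub, PowerSeries.coeff_X_pow_mul']
  simp only [Gaux, PowerSeries.coeff_mk, Nat.add_zero, Nat.choose_zero_right, Nat.cast_one,
    PowerSeries.coeff_one]
  by_cases hN : n ≤ N
  · have hN0 : ¬ N = 0 := by omega
    rw [if_pos hN, if_neg hN0]
    by_cases h : n ∣ N
    · have h' : n ∣ N - n := Nat.dvd_sub h dvd_rfl
      rw [if_pos h, if_pos h', sub_self]
    · have h' : ¬ n ∣ N - n := by
        intro hc
        apply h
        have h5 : N - n + n = N := Nat.sub_add_cancel hN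
        exact h5 ▸ Nat.dvd_add hc dvd_rfl
      rw [if_neg h, if_neg h', sub_zero]
  · rw [if_neg hN, sub_zero]
    rcases Nat.eq_zero_or_pos N with rfl | hN0
    · simp
    · have h : ¬ n ∣ N := fun hc => absurd (Nat.le_of_dvd hN0 hc) hN
      rw [if_neg h, if_neg (by omega : ¬ N = 0)]

private lemma one_sub_mul_Gaux (n s : ℕ) (hn : 0 < n) :
    (1 - PowerSeries.X ^ n) * Gaux n (s + 1) = Gaux n s := by
  ext N
  rw [sub_mul, one_mul, map_sub, PowerSeries.coeff_X_pow_mul']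
  simp only [Gaux, PowerSeries.coeff_mk]
  by_cases hN : n ≤ N
  · rw [if_pos hN]
    by_cases h : n ∣ N
    · have h' : n ∣ N - n := (Nat.dvd_sub h dvd_rfl)
      rw [if_pos h, if_pos h, if_pos h']
      obtain ⟨u, rfl⟩ := h
      have hu : 1 ≤ u := Nat.pos_of_ne_zero (by rintro rfl; simp at hN; omega)
      have e1 : n * u / n = u := Nat.mul_div_cancel_left _ hn
      have e2 : (n * u - n) / n = u - 1 := by
        rw [← Nat.mul_sub_one, mul_comm, Nat.mul_div_cancel _ hn]
      rw [e1, e2]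
      have h3 : u + (s + 1) = (u - 1 + (s + 1)) + 1 := by omega
      rw [h3, Nat.choose_succ_succ]
      have h4 : u - 1 + (s + 1) = u + s := by omega
      rw [h4]
      push_cast
      ring
    · have h' : ¬ n ∣ N - n := by
        intro hc
        apply h
        have h5 : N - n + n = N := Nat.sub_add_cancel hN
        exact h5 ▸ Nat.dvd_add hc dvd_rfl
      rw [if_neg h, if_neg h, if_neg h', sub_zero]
  · rw [if_neg hN, sub_zero]
    rcases Nat.eq_zero_or_pos N with rfl | hN0
    · simp
    · have h : ¬ n ∣ N := fun hc => absurd (Nat.le_of_dvd hN0 hc) hN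
      rw [if_neg h, if_neg h]

private lemma pow_mul_Gaux (n s : ℕ) (hn : 0 < n) :
    (1 - PowerSeries.X ^ n : PowerSeries ℚ) ^ (s + 1) * Gaux n s = 1 := by
  induction s with
  | zero => rw [pow_one]; exact one_sub_mul_Gaux0 n hn
  | succ s ih => rw [pow_succ, mul_assoc, one_sub_mul_Gaux n s hn, ih]

private lemma inv_pow_eq (n s : ℕ) (hn : 0 < n) :
    (((1 - PowerSeries.X ^ n : PowerSeries ℚ)) ^ (s + 1))⁻¹ = Gaux n s := by
  rw [eq_comm, PowerSeries.eq_inv_iff_mul_eq_one]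
  · rw [mul_comm]; exact pow_mul_Gaux n s hn
  · rw [map_pow, map_sub, map_one, map_pow, PowerSeries.constantCoeff_X,
      zero_pow hn.ne', sub_zero, one_pow]
    norm_num

private lemma inv_pow_eq' (n s : ℕ) (hn : 0 < n) (hs : 1 ≤ s) :
    (((1 - PowerSeries.X ^ n : PowerSeries ℚ)) ^ s)⁻¹ = Gaux n (s - 1) := by
  obtain ⟨t, rfl⟩ : ∃ t, s = t + 1 := ⟨s - 1, by omega⟩
  simpa using inv_pow_eq n t hn

private lemma binomPoly_eval (k : ℕ) (hk : 1 ≤ k) (u : ℕ) :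
    (binomPoly (2 * k) k).eval (u : ℚ) = ((u + k - 1).choose (2 * k - 1) : ℚ) := by
  unfold binomPoly
  rw [eval_smul, eval_prod]
  have h1 : ∀ a ∈ Finset.range (2 * k - 1),
      (X + C (((2 * k : ℕ) : ℚ) - 1 - (k : ℚ) - (a : ℚ))).eval (u : ℚ)
        = ((u + k - 1 : ℕ) : ℚ) - (a : ℕ) := by
    intro a _
    have : ((u + k - 1 : ℕ) : ℚ) = (u : ℚ) + (k : ℚ) - 1 := by
      push_cast [Nat.cast_sub (by omega : 1 ≤ u + k)]
      ring
    simp only [eval_add, eval_X, eval_C, this]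
    push_cast
    ring
  rw [Finset.prod_congr rfl h1, Finset.prod_range_natCast_sub,
    ← Nat.descFactorial_eq_prod_range, Nat.descFactorial_eq_factorial_mul_choose]
  have hf : ((2 * k - 1).factorial : ℚ) ≠ 0 := by
    exact_mod_cast (2 * k - 1).factorial_ne_zero
  push_cast
  rw [smul_eq_mul, ← mul_assoc, inv_mul_cancel₀ hf, one_mul]

private lemma binomPoly_natDegree_lt (k i : ℕ) (hk : 1 ≤ k) : (binomPoly k i).natDegree < k := by
  unfold binomPoly
  apply lt_of_le_of_lt (natDegree_smul_le _ _)
  apply lt_of_le_of_lt (natDegree_prod_le _ _)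
  calc ∑ a ∈ Finset.range (k - 1), (X + C ((k : ℚ) - 1 - (i : ℚ) - (a : ℚ))).natDegree
      ≤ ∑ _a ∈ Finset.range (k - 1), 1 := by
        apply Finset.sum_le_sum
        intro a _
        exact le_of_eq (natDegree_X_add_C _)
    _ < k := by simp; omega

private lemma binomPoly_coeff_zero (k : ℕ) (hk : 1 ≤ k) : (binomPoly (2 * k) k).coeff 0 = 0 := by
  rw [coeff_zero_eq_eval_zero]
  have h := binomPoly_eval k hk 0
  rw [Nat.cast_zero] at h
  rw [h, Nat.choose_eq_zero_of_lt (by omega), Nat.cast_zero]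

private lemma binomPoly_eval_eq_sum (k : ℕ) (hk : 1 ≤ k) (v : ℚ) :
    (binomPoly (2 * k) k).eval v
      = ∑ i ∈ Finset.Icc 1 (2 * k - 1), (binomPoly (2 * k) k).coeff i * v ^ i := by
  rw [eval_eq_sum_range' (lt_of_lt_of_le (binomPoly_natDegree_lt (2 * k) k (by omega)) le_rfl)]
  rw [Finset.range_eq_Ico, Finset.sum_eq_sum_Ico_succ_bot (by omega : 0 < 2 * k)]
  rw [binomPoly_coeff_zero k hk, zero_mul, zero_add]
  congr 1

private lemma strictAnti_fin_one (f : Fin 1 → ℕ) : StrictAnti f := by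
  intro a b h
  exact absurd (Subsingleton.elim a b) h.ne

private lemma term_eq (k N m : ℕ) (hk : 1 ≤ k) (hm : 1 ≤ m) :
    (if m * k ≤ N then
        (if m ∣ N - m * k then (((N - m * k) / m + (2 * k - 1)).choose (2 * k - 1) : ℚ) else 0)
      else 0)
    = if m ∣ N then ((N / m + k - 1).choose (2 * k - 1) : ℚ) else 0 := by
  by_cases hd : m ∣ N
  · rw [if_pos hd]
    obtain ⟨u, rfl⟩ := hd
    have e1 : m * u / m = u := Nat.mul_div_cancel_left _ hm
    rw [e1]
    by_cases hku : k ≤ u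
    · have h1 : m * k ≤ m * u := Nat.mul_le_mul_left m hku
      have h2 : m * u - m * k = m * (u - k) := by rw [Nat.mul_sub]
      rw [if_pos h1, h2, if_pos (Dvd.intro _ rfl), Nat.mul_div_cancel_left _ hm]
      congr 2
      omega
    · have h1 : ¬ m * k ≤ m * u := by
        intro hc
        exact hku (Nat.le_of_mul_le_mul_left hc hm)
      rw [if_neg h1, Nat.choose_eq_zero_of_lt (by omega), Nat.cast_zero]
  · rw [if_neg hd]
    by_cases h1 : m * k ≤ N
    · rw [if_pos h1, if_neg]
      intro hc
      apply hd
      have h5 : N - m * k + m * k = N := Nat.sub_add_cancel h1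
      exact h5 ▸ Nat.dvd_add hc (Dvd.intro k rfl)
    · rw [if_neg h1]

private lemma coeff_ZQ (k N : ℕ) (hk : 1 ≤ k) :
    PowerSeries.coeff N (ZQ QO 1 (fun _ => 2 * k)) =
      ∑ m ∈ Finset.Icc 1 N, (if m ∣ N then ((N / m + k - 1).choose (2 * k - 1) : ℚ) else 0) := by
  rw [ZQ, PowerSeries.coeff_mk]
  have step1 : ∀ n ∈ ((Finset.Iic fun _ => N : Finset (Fin 1 → ℕ))).filter
        (fun n => StrictAnti n ∧ ∀ j, 0 < n j),
      PowerSeries.coeff N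
        (∏ j, Polynomial.aeval ((PowerSeries.X : PowerSeries ℚ) ^ n j) (QO (2 * k)) *
          ((1 - (PowerSeries.X : PowerSeries ℚ) ^ n j) ^ (2 * k))⁻¹)
      = if (n 0) * k ≤ N then
          (if (n 0) ∣ N - (n 0) * k then
            (((N - (n 0) * k) / (n 0) + (2 * k - 1)).choose (2 * k - 1) : ℚ) else 0)
        else 0 := by
    intro n hn
    rw [Finset.mem_filter] at hn
    have hn0 : 0 < n 0 := hn.2.2 0
    rw [Fin.prod_univ_one]
    have hQO : QO (2 * k) = (X : Polynomial ℚ) ^ k := by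
      unfold QO
      rw [if_pos (Nat.mul_mod_right 2 k), Nat.mul_div_cancel_left k (by norm_num)]
    rw [hQO, map_pow, Polynomial.aeval_X, ← pow_mul,
      inv_pow_eq' (n 0) (2 * k) hn0 (by omega), PowerSeries.coeff_X_pow_mul']
    simp only [Gaux, PowerSeries.coeff_mk]
  rw [Finset.sum_congr rfl step1]
  refine Finset.sum_nbij' (fun n => n 0) (fun m => fun _ => m) ?_ ?_ ?_ ?_ ?_
  · intro n hn
    rw [Finset.mem_filter, Finset.mem_Iic] at hn
    rw [Finset.mem_Icc]
    exact ⟨hn.2.2 0, hn.1 0⟩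
  · intro m hm
    rw [Finset.mem_Icc] at hm
    rw [Finset.mem_filter, Finset.mem_Iic]
    exact ⟨fun i => hm.2, strictAnti_fin_one _, fun j => hm.1⟩
  · intro n hn
    funext i
    exact congrArg n (Subsingleton.elim 0 i)
  · intro m hm
    rfl
  · intro n hn
    rw [Finset.mem_filter] at hn
    exact term_eq k N (n 0) hk (hn.2.2 0)

private lemma coeff_bracket (j N : ℕ) :
    PowerSeries.coeff N (bracket 1 (fun _ => j)) =
      ((j - 1).factorial : ℚ)⁻¹ * ∑ p ∈ N.divisorsAntidiagonal, (p.2 : ℚ) ^ (j - 1) := by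
  rw [bracket, PowerSeries.coeff_mk]
  congr 1
  · rw [Fin.prod_univ_one]
  refine Finset.sum_nbij' (fun uv => (uv.1 0, uv.2 0))
    (fun p => (fun _ => p.1, fun _ => p.2)) ?_ ?_ ?_ ?_ ?_
  · rintro ⟨u, v⟩ huv
    rw [Finset.mem_filter] at huv
    obtain ⟨-, -, hu, hv, hs⟩ := huv
    rw [Fin.sum_univ_one] at hs
    rw [Nat.mem_divisorsAntidiagonal]
    exact ⟨hs, by simpa [← hs] using Nat.mul_ne_zero (hu 0).ne' (hv 0).ne'⟩
  · rintro ⟨a, b⟩ hp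
    rw [Nat.mem_divisorsAntidiagonal] at hp
    obtain ⟨hab, hN⟩ := hp
    simp only at hab
    have ha : 0 < a := Nat.pos_of_ne_zero (by rintro rfl; simp at hab; omega)
    have hb : 0 < b := Nat.pos_of_ne_zero (by rintro rfl; simp at hab; omega)
    have hNpos : 0 < N := Nat.pos_of_ne_zero hN
    rw [Finset.mem_filter, Finset.mem_product, Finset.mem_Iic, Finset.mem_Iic]
    refine ⟨⟨fun i => ?_, fun i => ?_⟩, strictAnti_fin_one _, fun _ => ha, fun _ => hb, ?_⟩
    · exact Nat.le_of_dvd hNpos ⟨b, hab.symm⟩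
    · exact Nat.le_of_dvd hNpos ⟨a, by rw [mul_comm]; exact hab.symm⟩
    · rw [Fin.sum_univ_one]; exact hab
  · rintro ⟨u, v⟩ huv
    dsimp only
    refine Prod.ext ?_ ?_ <;>
      · funext i
        exact congrArg _ (Subsingleton.elim 0 i)
  · rintro ⟨a, b⟩ hp
    rfl
  · rintro ⟨u, v⟩ huv
    rw [Fin.prod_univ_one]

private lemma mul_inv_aux (a c S : ℚ) (ha : a ≠ 0) : (a * c) * (a⁻¹ * S) = c * S := by
  field_simp

private lemma Icc_dvd_sum (N : ℕ) (f : ℕ → ℚ) :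
    ∑ m ∈ Finset.Icc 1 N, (if m ∣ N then f m else 0) = ∑ m ∈ N.divisors, f m := by
  rw [← Finset.sum_filter]
  congr 1

/-- `Z(2k) = Σ_{j=2}^{2k} b^{2k}_{k,j-1}·[j]`. -/
theorem Z_even_eq_sum_brackets (k : ℕ) (hk : 1 ≤ k) :
    ZQ QO 1 (fun _ => 2 * k) =
      ∑ j ∈ Finset.Icc 2 (2 * k), bcoef (2 * k) k (j - 1) • bracket 1 (fun _ => j) := by
  ext N
  rw [map_sum]
  have hR : ∀ j ∈ Finset.Icc 2 (2 * k),
      PowerSeries.coeff N (bcoef (2 * k) k (j - 1) • bracket 1 (fun _ => j))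
        = ∑ p ∈ N.divisorsAntidiagonal,
            (binomPoly (2 * k) k).coeff (j - 1) * (p.2 : ℚ) ^ (j - 1) := by
    intro j hj
    rw [map_smul, coeff_bracket, smul_eq_mul, bcoef,
      mul_inv_aux _ _ _ (by exact_mod_cast (j - 1).factorial_ne_zero), Finset.mul_sum]
  rw [Finset.sum_congr rfl hR, Finset.sum_comm]
  have hInner : ∀ p ∈ N.divisorsAntidiagonal,
      ∑ j ∈ Finset.Icc 2 (2 * k), (binomPoly (2 * k) k).coeff (j - 1) * (p.2 : ℚ) ^ (j - 1)
        = ((p.2 + k - 1).choose (2 * k - 1) : ℚ) := by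
    intro p hp
    rw [← binomPoly_eval k hk p.2, binomPoly_eval_eq_sum k hk]
    refine Finset.sum_nbij' (fun j => j - 1) (fun i => i + 1) ?_ ?_ ?_ ?_ ?_
    · intro j hj
      simp only [Finset.mem_Icc] at hj ⊢
      omega
    · intro i hi
      simp only [Finset.mem_Icc] at hi ⊢
      omega
    · intro j hj
      simp only [Finset.mem_Icc] at hj
      omega
    · intro i hi
      omega
    · intro j hj
      rfl
  rw [Finset.sum_congr rfl hInner, coeff_ZQ k N hk,
    Icc_dvd_sum N (fun m => ((N / m + k - 1).choose (2 * k - 1) : ℚ)),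
    Nat.sum_divisorsAntidiagonal' (fun u v => ((v + k - 1).choose (2 * k - 1) : ℚ)),
    ← Nat.sum_div_divisors N (fun d => ((d + k - 1).choose (2 * k - 1) : ℚ))]
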